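/- arXiv:2308.00555 — 4 statements merged into one kernel-verified Lean document; each statement's English description precedes it below -/
import Mathlib

section
/- Let Q be a path of length less than ζ^i in an edge-weighted graph, with ζ > 1 an integer. Then Q can be written as a concatenation Q_1 ∘ e_1 ∘ Q_2 ∘ e_2 ∘ ... ∘ Q_{ζ'} with ζ' ≤ ζ, where each subpath Q_j has length at most ζ^{i-1} and each connecting edge e_j has length less than ζ^i. -/
open SimpleGraph

/-- Total weight of a walk in an edge-weighted graph. -/
def walkWeight {V : Type*} (w : V → V → ℝ) {G : SimpleGraph V} :
    {u v : V} → G.Walk u v → ℝ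
  | _, _, SimpleGraph.Walk.nil => 0
  | _, _, SimpleGraph.Walk.cons (u := a) (v := b) _ p => w a b + walkWeight w p

/-- Interleaving concatenation `B₁ ++ [c₁] ++ B₂ ++ [c₂] ++ ⋯ ++ B_k` of a list of blocks
with a list of connectors. -/
def joinInter {α : Type*} : List (List α) → List α → List α
  | [], _ => []
  | [b], _ => b
  | b :: bs, c :: cs => b ++ c :: joinInter bs cs
  | b :: bs, [] => b ++ joinInter bs []

lemma joinInter_cons {α : Type*} (b : List α) {bs : List (List α)} (hbs : bs ≠ [])
    (c : α) (cs : List α) : joinInter (b :: bs) (c :: cs) = b ++ c :: joinInter bs cs := by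
  cases bs with
  | nil => exact absurd rfl hbs
  | cons b' bs' => rfl

lemma split_lemma {α : Type*} (f : α → ℝ) :
    ∀ (L : List α) (T : ℝ), (∀ x ∈ L, 0 ≤ f x) → 0 ≤ T →
    (L.map f).sum ≤ T ∨
    ∃ B c L', L = B ++ c :: L' ∧ (B.map f).sum ≤ T ∧ T < (B.map f).sum + f c
  | [], T, _, hT => Or.inl (by simpa using hT)
  | x :: L, T, hnn, hT => by
    by_cases hx : f x ≤ T
    · rcases split_lemma f L (T - f x)
        (fun y hy => hnn y (List.mem_cons_of_mem _ hy)) (by linarith) with h | ⟨B, c, L', hL, hB, hBc⟩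
      · left; simp only [List.map_cons, List.sum_cons]; linarith
      · exact Or.inr ⟨x :: B, c, L', by simp [hL],
          by simp only [List.map_cons, List.sum_cons]; linarith,
          by simp only [List.map_cons, List.sum_cons]; linarith⟩
    · exact Or.inr ⟨[], x, L, by simp, by simpa using hT, by simpa using lt_of_not_ge hx⟩

lemma greedy {α : Type*} (f : α → ℝ) (T : ℝ) (hT : 0 < T) (L : List α)
    (hnn : ∀ x ∈ L, 0 ≤ f x) :
    ∃ bs cs, L = joinInter bs cs ∧ bs.length = cs.length + 1 ∧
      (∀ b ∈ bs, ((b : List α).map f).sum ≤ T) ∧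
      (∀ c ∈ cs, f c ≤ (L.map f).sum) ∧
      (cs.length : ℝ) * T ≤ (L.map f).sum := by
  obtain ⟨n, hl⟩ : ∃ n, L.length = n := ⟨_, rfl⟩
  induction n using Nat.strong_induction_on generalizing L with
  | _ n ih =>
  subst hl
  rcases split_lemma f L T hnn hT.le with h | ⟨B, c, L', hL, hB, hBc⟩
  · refine ⟨[L], [], rfl, rfl, ?_, by simp, ?_⟩
    · intro b hb; simp at hb; subst hb; exact h
    · simpa using List.sum_nonneg (by simpa using hnn)
  · have hlen : L'.length < L.length := by simp [hL]; omega
    have hnn' : ∀ x ∈ L', 0 ≤ f x := fun x hx => hnn x (by simp [hL, hx])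
    obtain ⟨bs', cs', hj, hlen', hbs', hcs', hsum'⟩ := ih L'.length hlen L' hnn' rfl
    have hBnn : (0:ℝ) ≤ (B.map f).sum :=
      List.sum_nonneg (by simpa using fun x hx => hnn x (by simp [hL, hx]))
    have hsumL : (L.map f).sum = (B.map f).sum + f c + (L'.map f).sum := by
      simp [hL]; ring
    refine ⟨B :: bs', c :: cs', ?_, by simpa using hlen', ?_, ?_, ?_⟩
    · rw [hL, hj, joinInter_cons]
      intro h; rw [h] at hlen'; simp at hlen'
    · intro b hb
      rcases List.mem_cons.mp hb with rfl | hb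
      · exact hB
      · exact hbs' b hb
    · intro d hd
      have hL'nn : (0:ℝ) ≤ (L'.map f).sum := List.sum_nonneg (by simpa using hnn')
      rcases List.mem_cons.mp hd with rfl | hd
      · rw [hsumL]
        have := hnn d (by simp [hL]); linarith
      · have := hcs' d hd; rw [hsumL]
        have hc := hnn c (by simp [hL]); linarith
    · simp only [List.length_cons, Nat.cast_add, Nat.cast_one]
      rw [hsumL]; nlinarith

lemma walkWeight_eq_darts {V : Type*} (w : V → V → ℝ) {G : SimpleGraph V}
    {u v : V} (Q : G.Walk u v) :
    walkWeight w Q = (Q.darts.map fun d => w d.toProd.1 d.toProd.2).sum := by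
  induction Q with
  | nil => rfl
  | cons h p ih => simp [walkWeight, ih]

/-- Greedy decomposition of a short path.  If `Q` is a path (walk) of total length less than
`ζ^i` (with `ζ > 1` an integer, `i ≥ 1`), then its edge (dart) sequence can be written as a
concatenation `Q₁ ∘ e₁ ∘ Q₂ ∘ e₂ ∘ ⋯ ∘ Q_{ζ'}` with `ζ' ≤ ζ` subpaths, each subpath `Q_j` of
length at most `ζ^(i-1)` and each connecting edge `e_j` of length less than `ζ^i`. -/
theorem stmt5 {V : Type*} (G : SimpleGraph V) (w : V → V → ℝ)
    (hw : ∀ a b : V, 0 ≤ w a b)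
    (ζ : ℕ) (hζ : 1 < ζ) (i : ℕ) (hi : 1 ≤ i)
    {u v : V} (Q : G.Walk u v)
    (hQ : walkWeight w Q < (ζ : ℝ) ^ i) :
    ∃ (bs : List (List G.Dart)) (cs : List G.Dart),
      Q.darts = joinInter bs cs ∧
      bs.length = cs.length + 1 ∧
      bs.length ≤ ζ ∧
      (∀ b ∈ bs, (b.map fun d => w d.toProd.1 d.toProd.2).sum ≤ (ζ : ℝ) ^ (i - 1)) ∧
      (∀ c ∈ cs, w c.toProd.1 c.toProd.2 < (ζ : ℝ) ^ i) := by
  set f : G.Dart → ℝ := fun d => w d.toProd.1 d.toProd.2 with hf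
  have hT : (0:ℝ) < (ζ : ℝ) ^ (i - 1) := by positivity
  obtain ⟨bs, cs, hj, hlen, hbs, hcs, hsum⟩ :=
    greedy f ((ζ : ℝ) ^ (i - 1)) hT Q.darts (fun d _ => hw _ _)
  rw [← walkWeight_eq_darts] at hcs hsum
  have hpow : (ζ : ℝ) ^ i = (ζ : ℝ) * (ζ : ℝ) ^ (i - 1) := by
    conv_lhs => rw [show i = (i - 1) + 1 by omega]
    rw [pow_succ]; ring
  have hk : (cs.length : ℝ) < (ζ : ℝ) := by
    by_contra h
    push_neg at h
    have : (ζ : ℝ) * (ζ : ℝ) ^ (i-1) ≤ (cs.length : ℝ) * (ζ : ℝ) ^ (i-1) := by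
      exact mul_le_mul_of_nonneg_right h hT.le
    rw [← hpow] at this; linarith
  have hk' : cs.length < ζ := by exact_mod_cast hk
  exact ⟨bs, cs, hj, hlen, by omega, hbs, fun c hc => lt_of_le_of_lt (hcs c hc) hQ⟩
end

section
/- Let η be a subgraph of an edge-weighted graph with skeleton tree T_η such that every vertex of η is within distance Δ of T_η (distance measured in η), and let N be a Δ-net of T_η. Partition η into clusters by assigning each vertex v (in increasing order of dist_η(v,N)) to the cluster of the second vertex on a fixed shortest path from v to N, with each net point starting its own cluster. Then each resulting cluster contains a shortest path from each of its vertices to N, and each cluster has strong diameter at most 4Δ. -/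
open SimpleGraph

/-- Shortest-path distance in an edge-weighted graph. -/
noncomputable def gdist {V : Type*} (G : SimpleGraph V) (w : V → V → ℝ) (u v : V) : ℝ :=
  sInf (Set.range fun p : G.Walk u v => walkWeight w p)

/-- Distance from a vertex to a set. -/
noncomputable def gdistToSet {V : Type*} (G : SimpleGraph V) (w : V → V → ℝ)
    (v : V) (N : Set V) : ℝ :=
  sInf {x : ℝ | ∃ n ∈ N, gdist G w v n = x}

section Aux

variable {V : Type*} {G : SimpleGraph V} {w : V → V → ℝ}

@[simp] lemma walkWeight_nil {u : V} : walkWeight w (Walk.nil : G.Walk u u) = 0 := rfl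

@[simp] lemma walkWeight_cons {a b c : V} (h : G.Adj a b) (p : G.Walk b c) :
    walkWeight w (Walk.cons h p) = w a b + walkWeight w p := rfl

lemma walkWeight_append {a b c : V} (p : G.Walk a b) (q : G.Walk b c) :
    walkWeight w (p.append q) = walkWeight w p + walkWeight w q := by
  induction p with
  | nil => simp
  | cons h p ih => simp [ih]; ring

lemma walkWeight_copy {a b a' b' : V} (p : G.Walk a b) (h1 : a = a') (h2 : b = b') :
    walkWeight w (p.copy h1 h2) = walkWeight w p := by subst h1; subst h2; rfl

lemma walkWeight_reverse (hsym : ∀ a b : V, w a b = w b a) {a b : V} (p : G.Walk a b) :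
    walkWeight w p.reverse = walkWeight w p := by
  induction p with
  | nil => simp
  | cons h p ih =>
      rw [Walk.reverse_cons, walkWeight_append, ih, walkWeight_cons, walkWeight_nil,
        walkWeight_cons, hsym]
      ring

lemma walkWeight_nonneg (hpos : ∀ a b : V, G.Adj a b → 0 < w a b) {a b : V} (p : G.Walk a b) :
    0 ≤ walkWeight w p := by
  induction p with
  | nil => simp
  | cons h p ih => have := hpos _ _ h; simp only [walkWeight_cons]; linarith

lemma gdist_bddBelow (hpos : ∀ a b : V, G.Adj a b → 0 < w a b) (u v : V) :
    BddBelow (Set.range fun p : G.Walk u v => walkWeight w p) :=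
  ⟨0, by rintro x ⟨p, rfl⟩; exact walkWeight_nonneg hpos p⟩

lemma gdist_nonneg (hpos : ∀ a b : V, G.Adj a b → 0 < w a b) (u v : V) : 0 ≤ gdist G w u v :=
  Real.sInf_nonneg (by rintro x ⟨p, rfl⟩; exact walkWeight_nonneg hpos p)

lemma gdist_le (hpos : ∀ a b : V, G.Adj a b → 0 < w a b) {u v : V} (p : G.Walk u v) :
    gdist G w u v ≤ walkWeight w p :=
  csInf_le (gdist_bddBelow hpos u v) ⟨p, rfl⟩

lemma gdist_self (hpos : ∀ a b : V, G.Adj a b → 0 < w a b) (v : V) : gdist G w v v = 0 :=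
  le_antisymm (by simpa using gdist_le hpos (Walk.nil : G.Walk v v)) (gdist_nonneg hpos v v)

lemma gdist_triangle (hpos : ∀ a b : V, G.Adj a b → 0 < w a b) (hconn : G.Preconnected)
    (u v x : V) : gdist G w u x ≤ gdist G w u v + gdist G w v x := by
  refine le_of_forall_pos_le_add ?_
  intro ε hε
  have hne1 : (Set.range fun p : G.Walk u v => walkWeight w p).Nonempty := by
    obtain ⟨p⟩ := hconn u v; exact ⟨_, p, rfl⟩
  have hne2 : (Set.range fun p : G.Walk v x => walkWeight w p).Nonempty := by
    obtain ⟨p⟩ := hconn v x; exact ⟨_, p, rfl⟩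
  obtain ⟨a, ⟨p, rfl⟩, hp⟩ := Real.lt_sInf_add_pos hne1 (by positivity : (0:ℝ) < ε / 2)
  obtain ⟨b, ⟨q, rfl⟩, hq⟩ := Real.lt_sInf_add_pos hne2 (by positivity : (0:ℝ) < ε / 2)
  have h1 : gdist G w u x ≤ walkWeight w (p.append q) := gdist_le hpos _
  rw [walkWeight_append] at h1
  have hp' : walkWeight w p < gdist G w u v + ε / 2 := hp
  have hq' : walkWeight w q < gdist G w v x + ε / 2 := hq
  linarith

variable {N : Set V}

lemma gdistToSet_bddBelow (hpos : ∀ a b : V, G.Adj a b → 0 < w a b) (v : V) :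
    BddBelow {x : ℝ | ∃ n ∈ N, gdist G w v n = x} :=
  ⟨0, by rintro x ⟨n, _, rfl⟩; exact gdist_nonneg hpos v n⟩

lemma gdistToSet_nonneg (hpos : ∀ a b : V, G.Adj a b → 0 < w a b) (v : V) :
    0 ≤ gdistToSet G w v N :=
  Real.sInf_nonneg (by rintro x ⟨n, _, rfl⟩; exact gdist_nonneg hpos v n)

lemma gdistToSet_le (hpos : ∀ a b : V, G.Adj a b → 0 < w a b) (v : V) {n : V} (hn : n ∈ N) :
    gdistToSet G w v N ≤ gdist G w v n :=
  csInf_le (gdistToSet_bddBelow hpos v) ⟨n, hn, rfl⟩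

lemma gdistToSet_self (hpos : ∀ a b : V, G.Adj a b → 0 < w a b) {v : V} (hv : v ∈ N) :
    gdistToSet G w v N = 0 :=
  le_antisymm (by simpa [gdist_self hpos] using gdistToSet_le hpos v hv)
    (gdistToSet_nonneg hpos v)

end Aux

/-- Clustering of a supernode `η` around a `Δ`-net of its skeleton.  The graph `G` (with
weight `w`) plays the role of `η`; `T` is the vertex set of the skeleton `T_η`, every vertex
is within `Δ` of `T` and `N ⊆ T` is a `Δ`-net of the skeleton (`hNetCover`, `hNetSep`).
The clustering is built greedily: each net point `n` starts its own cluster (`cl n = n`),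
and every other vertex `v` joins the cluster of the second vertex `nxt v` on a fixed
shortest path from `v` to `N` (hypothesis `hnxt`).  Then each cluster contains a shortest
path from each of its vertices to `N`, and each cluster has strong diameter at most `4Δ`. -/
theorem stmt8 {V : Type*} [Fintype V] [DecidableEq V]
    (G : SimpleGraph V) (w : V → V → ℝ)
    (hpos : ∀ a b : V, G.Adj a b → 0 < w a b)
    (hsym : ∀ a b : V, w a b = w b a)
    (hconn : G.Preconnected)
    (Δ : ℝ) (hΔ : 0 < Δ)
    (T N : Set V) (hNT : N ⊆ T) (hNne : N.Nonempty)
    (hTcover : ∀ v : V, ∃ x ∈ T, gdist G w v x ≤ Δ)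
    (hNetCover : ∀ x ∈ T, ∃ n ∈ N, gdist G w x n ≤ Δ)
    (hNetSep : ∀ m ∈ N, ∀ n ∈ N, m ≠ n → Δ < gdist G w m n)
    (cl : V → V) (nxt : V → V)
    (hclN : ∀ v : V, cl v ∈ N)
    (hcenter : ∀ n ∈ N, cl n = n)
    (hnxt : ∀ v : V, v ∉ N →
      G.Adj v (nxt v) ∧
      gdistToSet G w v N = w v (nxt v) + gdistToSet G w (nxt v) N ∧
      cl v = cl (nxt v)) :
    (∀ v : V, ∃ p : G.Walk v (cl v),
      (∀ z ∈ p.support, cl z = cl v) ∧ walkWeight w p = gdistToSet G w v N) ∧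
    (∀ x y : V, cl x = cl y →
      ∃ p : G.Walk x y, (∀ z ∈ p.support, cl z = cl x) ∧ walkWeight w p ≤ 4 * Δ) := by
  classical
  -- measure for the induction
  set d : V → ℝ := fun v => gdistToSet G w v N with hd
  set m : V → ℕ := fun v => (Finset.univ.filter (fun u => d u < d v)).card with hm
  have hdec : ∀ v : V, v ∉ N → d (nxt v) < d v := by
    intro v hv
    obtain ⟨hadj, heq, -⟩ := hnxt v hv
    have := hpos _ _ hadj
    simp only [hd]
    linarith [heq]
  have hmdec : ∀ v : V, v ∉ N → m (nxt v) < m v := by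
    intro v hv
    apply Finset.card_lt_card
    rw [Finset.ssubset_iff_of_subset]
    · exact ⟨nxt v, by simp [hdec v hv], by simp⟩
    · intro u hu
      simp only [Finset.mem_filter, Finset.mem_univ, true_and] at hu ⊢
      exact hu.trans (hdec v hv)
  -- base case construction
  have base : ∀ v : V, v ∈ N → ∃ p : G.Walk v (cl v),
      (∀ z ∈ p.support, cl z = cl v) ∧ walkWeight w p = gdistToSet G w v N := by
    intro v hv
    rw [hcenter v hv]
    refine ⟨Walk.nil, ?_, ?_⟩
    · intro z hz
      simp only [Walk.support_nil, List.mem_singleton] at hz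
      rw [hz]; exact hcenter v hv
    · rw [walkWeight_nil, gdistToSet_self hpos hv]
  -- part 1 by strong induction on the measure
  have part1 : ∀ v : V, ∃ p : G.Walk v (cl v),
      (∀ z ∈ p.support, cl z = cl v) ∧ walkWeight w p = gdistToSet G w v N := by
    suffices H : ∀ (k : ℕ) (v : V), m v ≤ k → ∃ p : G.Walk v (cl v),
        (∀ z ∈ p.support, cl z = cl v) ∧ walkWeight w p = gdistToSet G w v N by
      intro v; exact H (m v) v le_rfl
    intro k
    induction k with
    | zero =>
        intro v hv
        by_cases hvN : v ∈ N
        · exact base v hvN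
        · exact absurd (lt_of_lt_of_le (hmdec v hvN) hv) (Nat.not_lt_zero _)
    | succ k ih =>
        intro v hv
        by_cases hvN : v ∈ N
        · exact base v hvN
        · obtain ⟨hadj, heq, hcl⟩ := hnxt v hvN
          obtain ⟨q, hq, hwq⟩ := ih (nxt v) (by have := hmdec v hvN; omega)
          rw [hcl]
          refine ⟨Walk.cons hadj q, ?_, ?_⟩
          · intro z hz
            rw [Walk.support_cons, List.mem_cons] at hz
            rcases hz with rfl | hz
            · exact hcl
            · exact hq z hz
          · rw [walkWeight_cons, hwq, ← heq]
  refine ⟨part1, ?_⟩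
  -- distance to net is at most 2Δ
  have h2Δ : ∀ v : V, gdistToSet G w v N ≤ 2 * Δ := by
    intro v
    obtain ⟨t, htT, hvt⟩ := hTcover v
    obtain ⟨n, hnN, htn⟩ := hNetCover t htT
    calc gdistToSet G w v N ≤ gdist G w v n := gdistToSet_le hpos v hnN
      _ ≤ gdist G w v t + gdist G w t n := gdist_triangle hpos hconn v t n
      _ ≤ 2 * Δ := by linarith
  intro x y hxy
  obtain ⟨p, hp, hwp⟩ := part1 x
  obtain ⟨q, hq, hwq⟩ := part1 y
  refine ⟨p.append ((q.copy rfl hxy.symm).reverse), ?_, ?_⟩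
  · intro z hz
    rw [Walk.mem_support_append_iff] at hz
    rcases hz with hz | hz
    · exact hp z hz
    · rw [Walk.support_reverse, List.mem_reverse, Walk.support_copy] at hz
      rw [hq z hz, hxy]
  · rw [walkWeight_append, walkWeight_reverse hsym, walkWeight_copy, hwp, hwq]
    have := h2Δ x
    have := h2Δ y
    linarith
end

section
/- Let Ĝ be a graph and suppose for every vertex class (supernode) η the set of tree-decomposition bags containing η forms a connected subtree, and for every edge of Ĝ between supernodes η₁ and η₂ some bag contains both. Then for any connected subgraph P of the original graph G, the union of the bag-subtrees of all supernodes intersecting P is a connected subtree of the decomposition tree; consequently there is a supernode η intersected by P such that P is contained in the union of supernodes in the subtree of the partition tree rooted at η. -/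
open SimpleGraph

private lemma reach_induce_mono {S : Type*} (τ : SimpleGraph S) {s t : Set S}
    (h : s ⊆ t) {a b : ↥s} (hr : (τ.induce s).Reachable a b) :
    (τ.induce t).Reachable ⟨a, h a.2⟩ ⟨b, h b.2⟩ := by
  let f : τ.induce s →g τ.induce t := ⟨Set.inclusion h, fun {x y} hxy => hxy⟩
  exact hr.map f

/-- Connected subgraphs live in subtrees of a tree decomposition into supernodes.
`τ` is the expansion of a partition tree of `G` into supernodes: a tree (connected and
acyclic) on the supernode type `S`, where the bag `B η` contains `η` itself and otherwise
only strict ancestors of `η` in the partition tree (`anc` is the strict ancestor relation).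
The bags containing any fixed supernode form a connected subtree (`hsubtree`), and both
endpoints of any edge of `G` have their supernodes in a common bag (`hedge`).  Then for any
nonempty connected subgraph `p` of `G`, the union of the bag-subtrees of all supernodes
intersecting `p` is a connected subtree of `τ`; consequently there is a supernode `η`
intersected by `p` such that `p` is contained in `dom(η)`, the union of `η` and its
descendants. -/
theorem stmt16 {V S : Type*} [Finite S] (G : SimpleGraph V)
    (τ : SimpleGraph S) (hτc : τ.Connected) (hτa : τ.IsAcyclic)
    (B : S → Set S) (sn : V → S)
    (anc : S → S → Prop)
    (hancT : Transitive anc) (hancI : Irreflexive anc)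
    (hchain : ∀ i j k : S, anc i k → anc j k → anc i j ∨ anc j i ∨ i = j)
    (hself : ∀ η : S, η ∈ B η)
    (hmem : ∀ η η' : S, η' ∈ B η → η' = η ∨ anc η' η)
    (hsubtree : ∀ η : S, (τ.induce {i | η ∈ B i}).Connected)
    (hedge : ∀ u v : V, G.Adj u v → ∃ i : S, sn u ∈ B i ∧ sn v ∈ B i)
    (p : Set V) (hp : p.Nonempty) (hpc : (G.induce p).Connected) :
    (τ.induce {i | ∃ v ∈ p, sn v ∈ B i}).Connected ∧
    ∃ η : S, (∃ v ∈ p, sn v = η) ∧ ∀ v ∈ p, sn v = η ∨ anc η (sn v) := by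
  classical
  set U : Set S := {i | ∃ v ∈ p, sn v ∈ B i} with hUdef
  -- comparability of supernodes of adjacent vertices
  have cmp : ∀ u v : V, G.Adj u v →
      sn u = sn v ∨ anc (sn u) (sn v) ∨ anc (sn v) (sn u) := by
    intro u v huv
    obtain ⟨i, hiu, hiv⟩ := hedge u v huv
    rcases hmem i (sn u) hiu with hu | hu <;> rcases hmem i (sn v) hiv with hv | hv
    · exact Or.inl (hu.trans hv.symm)
    · exact Or.inr (Or.inr (hu ▸ hv))
    · exact Or.inr (Or.inl (hv ▸ hu))
    · rcases hchain (sn u) (sn v) i hu hv with h | h | h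
      · exact Or.inr (Or.inl h)
      · exact Or.inr (Or.inr h)
      · exact Or.inl h
  -- Part 1: connectivity of the union of subtrees
  obtain ⟨v0, hv0⟩ := hp
  -- reachability within one supernode's subtree, pushed into U
  have R : ∀ (v : V) (hv : v ∈ p) (i j : S) (hi : sn v ∈ B i) (hj : sn v ∈ B j),
      (τ.induce U).Reachable ⟨i, ⟨v, hv, hi⟩⟩ ⟨j, ⟨v, hv, hj⟩⟩ := by
    intro v hv i j hi hj
    have hsub : {k | sn v ∈ B k} ⊆ U := fun k hk => ⟨v, hv, hk⟩
    have := (hsubtree (sn v)).preconnected ⟨i, hi⟩ ⟨j, hj⟩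
    exact reach_induce_mono τ hsub this
  have M : ∀ {a b : ↥p} (w : (G.induce p).Walk a b) (i j : S)
      (hi : sn ↑a ∈ B i) (hj : sn ↑b ∈ B j),
      (τ.induce U).Reachable ⟨i, ⟨↑a, a.2, hi⟩⟩ ⟨j, ⟨↑b, b.2, hj⟩⟩ := by
    intro a b w
    induction w with
    | nil => intro i j hi hj; exact R _ (Subtype.mem _) i j hi hj
    | @cons u v w h q ih =>
      intro i j hi hj
      obtain ⟨k, hk1, hk2⟩ := hedge ↑u ↑v h
      exact (R ↑u u.2 i k hi hk1).trans (ih k j hk2 hj)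
  have part1 : (τ.induce U).Connected := by
    rw [connected_iff]
    constructor
    · rintro ⟨i, hi⟩ ⟨j, hj⟩
      obtain ⟨v, hv, hvi⟩ := hi
      obtain ⟨w, hw, hwj⟩ := hj
      obtain ⟨wk⟩ := hpc.preconnected ⟨v, hv⟩ ⟨w, hw⟩
      exact M wk i j hvi hwj
    · exact ⟨⟨sn v0, ⟨v0, hv0, hself (sn v0)⟩⟩⟩
  refine ⟨part1, ?_⟩
  -- Part 2: pick a minimal supernode under anc
  haveI : IsTrans S anc := ⟨fun a b c => @hancT a b c⟩
  haveI : IsIrrefl S anc := ⟨hancI⟩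
  have hwf : WellFounded anc := Finite.wellFounded_of_trans_of_irrefl anc
  obtain ⟨η, ⟨w0, hw0, hw0η⟩, hmin⟩ :=
    hwf.has_min {s | ∃ v ∈ p, sn v = s} ⟨sn v0, v0, hv0, rfl⟩
  refine ⟨η, ⟨w0, hw0, hw0η⟩, ?_⟩
  have step : ∀ {a b : ↥p}, (G.induce p).Walk a b →
      (sn ↑a = η ∨ anc η (sn ↑a)) → (sn ↑b = η ∨ anc η (sn ↑b)) := by
    intro a b w
    induction w with
    | nil => exact id
    | @cons u v w h q ih =>
      intro ha
      apply ih
      rcases cmp ↑u ↑v h with hc | hc | hc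
      · exact hc ▸ ha
      · rcases ha with ha | ha
        · exact Or.inr (ha ▸ hc)
        · exact Or.inr (hancT ha hc)
      · -- sn v is a strict ancestor of sn u
        rcases ha with ha | ha
        · exact absurd (ha ▸ hc) (hmin (sn ↑v) ⟨↑v, v.2, rfl⟩)
        · rcases hchain (sn ↑v) η (sn ↑u) hc ha with h' | h' | h'
          · exact absurd h' (hmin (sn ↑v) ⟨↑v, v.2, rfl⟩)
          · exact Or.inr h'
          · exact Or.inl h'
  intro v hv
  obtain ⟨wk⟩ := hpc.preconnected ⟨w0, hw0⟩ ⟨v, hv⟩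
  exact step wk (Or.inl hw0η)
end

section
/- Let P be a path of length at most Δ partitioned greedily into maximal 'detours' and unassigned segments, where a detour is a maximal subpath whose endpoints are assigned to the same terminal and the path meets at most τ clusters, with vertices of the same cluster assigned to the same terminal. Then P decomposes into at most τ detours and at most τ+1 (possibly empty) segments of unassigned vertices. -/
/-- Length of a path given as a list of vertices, with respect to edge weights `w`. -/
def pathLen {V : Type*} (w : V → V → ℝ) : List V → ℝ
  | [] => 0
  | [_] => 0
  | a :: b :: rest => w a b + pathLen w (b :: rest)

lemma splitLast {α : Type*} (q : α → Bool) :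
    ∀ R : List α, (∃ v ∈ R, q v = true) →
    ∃ D T, R = D ++ T ∧ (∀ v ∈ T, q v = false) ∧ ∃ y, D.getLast? = some y ∧ q y = true := by
  intro R
  induction R using List.reverseRecOn with
  | nil => simp
  | append_singleton R a ih =>
    intro h
    by_cases ha : q a = true
    · exact ⟨R ++ [a], [], by simp, by simp, a, by simp, ha⟩
    · obtain ⟨v, hv, hq⟩ := h
      have hvR : ∃ v ∈ R, q v = true := by
        rcases List.mem_append.1 hv with h' | h'
        · exact ⟨v, h', hq⟩
        · simp only [List.mem_singleton] at h'
          subst h'; exact absurd hq ha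
      obtain ⟨D, T, hR, hT, y, hy, hqy⟩ := ih hvR
      refine ⟨D, T ++ [a], by rw [hR]; simp, ?_, y, hy, hqy⟩
      intro v hv'
      rcases List.mem_append.1 hv' with h' | h'
      · exact hT v h'
      · simp only [List.mem_singleton] at h'; subst h'
        simpa using ha

lemma key {V K ι : Type*} [DecidableEq ι] (f : V → Option K) (cl : V → ι) :
    ∀ n : ℕ, ∀ L : List V, L.length ≤ n →
    (∀ u ∈ L, ∀ v ∈ L, cl u = cl v →
      ∀ a b : K, f u = some a → f v = some b → a = b) →
    ∃ segs : List (List V × Bool),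
      L = (segs.map Prod.fst).flatten ∧
      (∀ s ∈ segs,
        (s.2 = true → ∃ (t : K) (x y : V),
          s.1.head? = some x ∧ s.1.getLast? = some y ∧ f x = some t ∧ f y = some t) ∧
        (s.2 = false → ∀ x ∈ s.1, f x = none)) ∧
      segs.countP (fun s => s.2) ≤ ((L.filter (fun v => (f v).isSome)).map cl).toFinset.card ∧
      segs.countP (fun s => !s.2) ≤ ((L.filter (fun v => (f v).isSome)).map cl).toFinset.card + 1 := by
  intro n
  induction n with
  | zero =>
    intro L hL _
    have : L = [] := List.length_eq_zero_iff.1 (Nat.le_zero.1 hL)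
    subst this
    exact ⟨[], by simp, by simp, by simp, by simp⟩
  | succ n ih =>
    intro L hL hsame
    set p : V → Bool := fun v => (f v).isSome with hp
    obtain ⟨U, R, hLUR, hUnone, hRhead⟩ :
        ∃ U R : List V, L = U ++ R ∧ (∀ v ∈ U, f v = none) ∧
          (∀ z zs, R = z :: zs → p z = true) := by
      refine ⟨L.takeWhile (fun v => !(p v)), L.dropWhile (fun v => !(p v)),
        List.takeWhile_append_dropWhile.symm, ?_, ?_⟩
      · intro v hv
        have h1 := List.mem_takeWhile_imp hv
        simp only [Bool.not_eq_true'] at h1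
        have h2 : (f v).isSome = false := by simpa [hp] using h1
        exact Option.not_isSome_iff_eq_none.1 (by simp [h2])
      · intro z zs hzz
        have hne : L.dropWhile (fun v => !(p v)) ≠ [] := by rw [hzz]; simp
        have h1 := List.head_dropWhile_not (fun v => !(p v)) hne
        have h2 : (L.dropWhile (fun v => !(p v))).head hne = z := by
          simp [hzz]
        rw [h2] at h1
        simpa using h1
    cases hRc : R with
    | nil =>
      subst hRc
      refine ⟨[(L, false)], by simp, ?_, by simp, by simp⟩
      intro s hs
      simp only [List.mem_singleton] at hs
      subst hs
      refine ⟨by intro h; simp at h, fun _ x hx => ?_⟩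
      have : x ∈ U := by rw [hLUR] at hx; simpa using hx
      exact hUnone x this
    | cons x xs =>
      subst hRc
      have hpx : p x = true := hRhead x xs rfl
      set q : V → Bool := fun v => p v && (cl v == cl x) with hq
      have hqx : q x = true := by simp [hq, hpx]
      obtain ⟨D, T, hRDT, hTq, y, hyD, hqy⟩ :=
        splitLast q (x :: xs) ⟨x, by simp, hqx⟩
      have hDne : D ≠ [] := by
        intro h; rw [h] at hyD; simp at hyD
      have hLform : L = U ++ D ++ T := by rw [hLUR, hRDT, List.append_assoc]
      have hmemL : ∀ v, v ∈ D ∨ v ∈ T ∨ v ∈ U → v ∈ L := by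
        intro v hv
        rw [hLform]
        rcases hv with h | h | h <;> simp [h]
      have hxD : x ∈ D := by
        have hxR : x ∈ D ++ T := by rw [← hRDT]; simp
        rcases List.mem_append.1 hxR with h | h
        · exact h
        · exact absurd (hTq x h) (by simp [hqx])
      have hTlen : T.length ≤ n := by
        have h1 : L.length = U.length + (D.length + T.length) := by
          rw [hLform]; simp
        have h2 : 1 ≤ D.length := List.length_pos_iff.2 hDne
        omega
      have hsameT : ∀ u ∈ T, ∀ v ∈ T, cl u = cl v →
          ∀ a b : K, f u = some a → f v = some b → a = b := by
        intro u hu v hv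
        exact hsame u (hmemL u (Or.inr (Or.inl hu))) v (hmemL v (Or.inr (Or.inl hv)))
      obtain ⟨segsT, hflat, hprops, hcT, hcF⟩ := ih T hTlen hsameT
      set SL := ((L.filter (fun v => (f v).isSome)).map cl).toFinset with hSL
      set ST := ((T.filter (fun v => (f v).isSome)).map cl).toFinset with hST
      have hclxSL : cl x ∈ SL := by
        simp only [hSL, List.mem_toFinset, List.mem_map]
        refine ⟨x, ?_, rfl⟩
        rw [List.mem_filter]
        exact ⟨hmemL x (Or.inl hxD), by simpa [hp] using hpx⟩
      have hSTsub : ST ⊆ SL.erase (cl x) := by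
        intro c hc
        simp only [hST, List.mem_toFinset, List.mem_map] at hc
        obtain ⟨v, hv, hcv⟩ := hc
        rw [List.mem_filter] at hv
        obtain ⟨hvT, hvs⟩ := hv
        have hqv := hTq v hvT
        have hclv : cl v ≠ cl x := by
          simp only [hq, Bool.and_eq_false_iff, hp] at hqv
          rcases hqv with h | h
          · exact absurd hvs (by simp [h])
          · simpa using h
        rw [Finset.mem_erase]
        refine ⟨by rw [← hcv]; exact hclv, ?_⟩
        simp only [hSL, List.mem_toFinset, List.mem_map]
        exact ⟨v, List.mem_filter.2 ⟨hmemL v (Or.inr (Or.inl hvT)), hvs⟩, hcv⟩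
      have hcard : ST.card + 1 ≤ SL.card := by
        have h1 : ST.card ≤ (SL.erase (cl x)).card := Finset.card_le_card hSTsub
        have h2 : (SL.erase (cl x)).card = SL.card - 1 := Finset.card_erase_of_mem hclxSL
        have h3 : 1 ≤ SL.card := Finset.card_pos.2 ⟨cl x, hclxSL⟩
        omega
      refine ⟨(U, false) :: (D, true) :: segsT, ?_, ?_, ?_, ?_⟩
      · rw [hLform]
        simp [← hflat]
      · intro s hs
        rcases List.mem_cons.1 hs with h | h
        · subst h
          exact ⟨by intro h; simp at h, fun _ v hv => hUnone v hv⟩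
        rcases List.mem_cons.1 h with h | h
        · subst h
          refine ⟨?_, by intro h; simp at h⟩
          intro _
          have hheadD : D.head? = some x := by
            cases D with
            | nil => exact absurd rfl hDne
            | cons d ds =>
              have h1 : x = d := by
                rw [List.cons_append] at hRDT
                exact (List.cons.inj hRDT).1
              simp [← h1]
          obtain ⟨a, hfx⟩ := Option.isSome_iff_exists.1 (by simpa [hp] using hpx)
          have hpy : (f y).isSome := by
            simp only [hq, Bool.and_eq_true] at hqy
            simpa [hp] using hqy.1
          obtain ⟨b, hfy⟩ := Option.isSome_iff_exists.1 hpy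
          have hcly : cl y = cl x := by
            simp only [hq, Bool.and_eq_true, beq_iff_eq] at hqy
            exact hqy.2
          have hyL : y ∈ L := hmemL y (Or.inl (List.mem_of_mem_getLast? hyD))
          have hxL : x ∈ L := hmemL x (Or.inl hxD)
          have hab : b = a := hsame y hyL x hxL hcly b a hfy hfx
          exact ⟨a, x, y, hheadD, hyD, hfx, by rw [hfy, hab]⟩
        · exact hprops s h
      · have h1 : List.countP (fun s => s.2) ((U, false) :: (D, true) :: segsT)
            = List.countP (fun s => s.2) segsT + 1 := by
          simp [List.countP_cons]
        rw [h1]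
        omega
      · have h1 : List.countP (fun s => !s.2) ((U, false) :: (D, true) :: segsT)
            = List.countP (fun s => !s.2) segsT + 1 := by
          simp [List.countP_cons]
        rw [h1]
        omega

/-- Greedy decomposition of a path into detours and unassigned segments.  The path is the
list `L` of vertices, of length at most `Δ`; `f` assigns (some) vertices to terminals and
`cl` assigns vertices to clusters; `L` meets at most `τ` clusters, and all assigned vertices
of one cluster are assigned to the same terminal.  Then `L` decomposes into consecutive
segments, each tagged as a detour (`true`: first and last vertices assigned to the same
terminal) or an unassigned segment (`false`: all vertices unassigned), with at most `τ`
detours and at most `τ + 1` unassigned segments. -/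
theorem stmt18 {V K ι : Type*} [DecidableEq ι]
    (w : V → V → ℝ) (Δ : ℝ)
    (f : V → Option K) (cl : V → ι) (τ : ℕ)
    (L : List V)
    (hlen : pathLen w L ≤ Δ)
    (hτ : (L.map cl).toFinset.card ≤ τ)
    (hsame : ∀ u ∈ L, ∀ v ∈ L, cl u = cl v →
      ∀ a b : K, f u = some a → f v = some b → a = b) :
    ∃ segs : List (List V × Bool),
      L = (segs.map Prod.fst).flatten ∧
      (∀ s ∈ segs,
        (s.2 = true → ∃ (t : K) (x y : V),
          s.1.head? = some x ∧ s.1.getLast? = some y ∧ f x = some t ∧ f y = some t) ∧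
        (s.2 = false → ∀ x ∈ s.1, f x = none)) ∧
      segs.countP (fun s => s.2) ≤ τ ∧
      segs.countP (fun s => !s.2) ≤ τ + 1 := by
  obtain ⟨segs, h1, h2, h3, h4⟩ := key f cl L.length L le_rfl hsame
  refine ⟨segs, h1, h2, ?_, ?_⟩
  · refine h3.trans (le_trans (Finset.card_le_card ?_) hτ)
    intro c hc
    simp only [List.mem_toFinset, List.mem_map] at hc ⊢
    obtain ⟨v, hv, hcv⟩ := hc
    exact ⟨v, (List.mem_filter.1 hv).1, hcv⟩
  · refine h4.trans ?_
    have : ((L.filter (fun v => (f v).isSome)).map cl).toFinset.card ≤ τ := by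
      refine le_trans (Finset.card_le_card ?_) hτ
      intro c hc
      simp only [List.mem_toFinset, List.mem_map] at hc ⊢
      obtain ⟨v, hv, hcv⟩ := hc
      exact ⟨v, (List.mem_filter.1 hv).1, hcv⟩
    omega
end
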